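/- Let d ≥ 1, β > 0. Let φ₁ʳ : ℝ^d → [0,∞) be an even probability density of class C² with bounded derivatives up to order 2, belonging to L²(ℝ^d) and with finite first moment ∫ |x| φ₁ʳ(x) dx < ∞; set φ₁ := φ₁ʳ ∗ φ₁ʳ and for N ≥ 1 let φ_Nʳ(x) = N^β φ₁ʳ(N^{β/d} x) and φ_N(x) = N^β φ₁(N^{β/d} x). Let ρ : ℝ^d → [0,∞) be a probability density of class C² with bounded derivatives up to order 2 and ρ ∈ L²(ℝ^d), and let v ∈ C²(ℝ^d, ℝ^d) be bounded with bounded derivatives up to order 2. For points x₁,…,x_N ∈ ℝ^d define R_N := 2 [ (1/N) Σ_{k} ∇((ρ ∗ φ_Nʳ) − ρ)(x_k) · v(x_k) − ∫ ∇((ρ ∗ φ_Nʳ) − ρ)(x) · v(x) ρ(x) dx ] + 2 ∫ ρ(x) ∇( (S_N ∗ φ_N)(x) − (S_N ∗ φ_Nʳ)(x) ) · v(x) dx. Then there exists a constant C, depending only on d, β, φ₁ʳ, ρ and v (not on N or on the points x₁,…,x_N), such that |R_N| ≤ C N^{−β/d} for all N ≥ 1. -/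

import Mathlib

/-!
Write `ψ = φ_Nʳ`; then `φ_N = ψ ∗ ψ`, and the first moment of `ψ` is `N^(-β/d) ∫ |x| φ₁ʳ`.
Both parts of `R_N` are bounded by a Lipschitz constant times this moment.
The first bracket is small pointwise: `∇(ρ ∗ ψ - ρ)(x) = ∫ ψ(y) (∇ρ(x - y) - ∇ρ(x)) dy`.
In the second term, integration by parts moves the gradient onto the vector field `ρ v`, and for
the Lipschitz function `h = div (ρ v)` (translated by `x_l`),
`∫ (ψ ∗ ψ) h - ∫ ψ h = ∫ ψ(u) ∫ ψ(t) (h(t + u) - h(t)) dt du`.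
-/

open MeasureTheory Finset RealInnerProductSpace

noncomputable section

/-- Convolution `(f ∗ g)(x) = ∫ f(x-y) g(y) dy` on `ℝ^d`. -/
def conv {d : ℕ} (f g : EuclideanSpace ℝ (Fin d) → ℝ) :
    EuclideanSpace ℝ (Fin d) → ℝ :=
  fun x => ∫ y, f (x - y) * g y

/-- Rescaling `ψ_N(x) = N^β ψ(N^(β/d) x)`. -/
def scaleN {d : ℕ} (β : ℝ) (N : ℕ) (ψ : EuclideanSpace ℝ (Fin d) → ℝ) :
    EuclideanSpace ℝ (Fin d) → ℝ :=
  fun x => (N : ℝ) ^ β * ψ (((N : ℝ) ^ (β / d)) • x)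

open scoped NNReal

section BoundedDerivatives

variable {E F : Type*} [NormedAddCommGroup E] [NormedSpace ℝ E]
  [NormedAddCommGroup F] [NormedSpace ℝ F]

def BoundedIteratedFDeriv (n : ℕ) (f : E → F) : Prop :=
  ∀ i : ℕ, i ≤ n → ∃ C, ∀ x, ‖iteratedFDeriv ℝ i f x‖ ≤ C

namespace BoundedIteratedFDeriv

variable {n : ℕ} {f : E → F}

theorem exists_uniform (hf : BoundedIteratedFDeriv n f) :
    ∃ C, 0 ≤ C ∧ ∀ i ≤ n, ∀ x, ‖iteratedFDeriv ℝ i f x‖ ≤ C := by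
  choose! C hC using hf
  refine ⟨∑ i ∈ range (n + 1), |C i|, by positivity, fun i hi x => ?_⟩
  calc ‖iteratedFDeriv ℝ i f x‖ ≤ |C i| := (hC i hi x).trans (le_abs_self _)
    _ ≤ ∑ i ∈ range (n + 1), |C i| :=
      single_le_sum (f := fun i => |C i|) (fun _ _ => abs_nonneg _) (mem_range.2 (by omega))

theorem mono {m : ℕ} (hf : BoundedIteratedFDeriv n f) (hmn : m ≤ n) :
    BoundedIteratedFDeriv m f :=
  fun i hi => hf i (hi.trans hmn)

theorem exists_norm_le (hf : BoundedIteratedFDeriv n f) : ∃ C, ∀ x, ‖f x‖ ≤ C := by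
  simpa only [norm_iteratedFDeriv_zero] using hf 0 n.zero_le

theorem exists_norm_fderiv_le (hf : BoundedIteratedFDeriv n f) (hn : 1 ≤ n) :
    ∃ C, ∀ x, ‖fderiv ℝ f x‖ ≤ C := by
  simpa only [← norm_iteratedFDeriv_fderiv (n := 0), norm_iteratedFDeriv_zero] using hf 1 hn

theorem exists_lipschitzWith_fderiv (hf : BoundedIteratedFDeriv n f) (hn : 2 ≤ n)
    (hf' : ContDiff ℝ n f) : ∃ L, LipschitzWith L (fderiv ℝ f) := by
  obtain ⟨C, hC⟩ := hf 2 hn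
  refine ⟨C.toNNReal, lipschitzWith_of_nnnorm_fderiv_le
    ((hf'.fderiv_right (m := 1) (by exact_mod_cast hn)).differentiable one_ne_zero) fun x => ?_⟩
  rw [← NNReal.coe_le_coe, coe_nnnorm, ← norm_iteratedFDeriv_one, norm_iteratedFDeriv_fderiv]
  exact (hC x).trans (Real.le_coe_toNNReal C)

theorem smul {φ : E → ℝ} {g : E → F} (hφ : ContDiff ℝ n φ) (hg : ContDiff ℝ n g)
    (hφb : BoundedIteratedFDeriv n φ) (hgb : BoundedIteratedFDeriv n g) :
    BoundedIteratedFDeriv n (fun x => φ x • g x) := by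
  obtain ⟨Cφ, hCφ0, hCφ⟩ := hφb.exists_uniform
  obtain ⟨Cg, hCg0, hCg⟩ := hgb.exists_uniform
  refine fun i hi => ⟨2 ^ i * (Cφ * Cg), fun x => ?_⟩
  calc ‖iteratedFDeriv ℝ i (fun x => φ x • g x) x‖
      ≤ ∑ j ∈ range (i + 1), (i.choose j : ℝ) * ‖iteratedFDeriv ℝ j φ x‖ *
          ‖iteratedFDeriv ℝ (i - j) g x‖ :=
        norm_iteratedFDeriv_smul_le hφ hg x (by exact_mod_cast hi)
    _ ≤ ∑ j ∈ range (i + 1), (i.choose j : ℝ) * Cφ * Cg := by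
      gcongr with j hj
      · exact hCφ j (by simp at hj; omega) x
      · exact hCg _ (by omega) x
    _ = 2 ^ i * (Cφ * Cg) := by
      rw [← sum_mul, ← sum_mul, ← Nat.cast_sum, Nat.sum_range_choose]
      push_cast
      ring

end BoundedIteratedFDeriv

end BoundedDerivatives

structure IsProbabilityDensity {α : Type*} [MeasurableSpace α] (ψ : α → ℝ) (μ : Measure α) :
    Prop where
  nonneg : ∀ x, 0 ≤ ψ x
  integrable : Integrable ψ μ
  integral_eq_one : ∫ x, ψ x ∂μ = 1

theorem IsProbabilityDensity.integral_norm_mul_nonneg {E : Type*} [NormedAddCommGroup E]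
    [MeasurableSpace E] {μ : Measure E} {ψ : E → ℝ} (hψ : IsProbabilityDensity ψ μ) :
    0 ≤ ∫ y, ‖y‖ * ψ y ∂μ :=
  integral_nonneg fun y => mul_nonneg (norm_nonneg y) (hψ.nonneg y)

section Averages

variable {α : Type*} [MeasurableSpace α] {μ : Measure α}

theorem IsProbabilityDensity.norm_integral_smul_le {G : Type*} [NormedAddCommGroup G]
    [NormedSpace ℝ G] {ψ : α → ℝ} (hψ : IsProbabilityDensity ψ μ) {F : α → G} {B : ℝ}
    (hF : ∀ y, ‖F y‖ ≤ B) : ‖∫ y, ψ y • F y ∂μ‖ ≤ B := by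
  refine (norm_integral_le_of_norm_le (hψ.integrable.mul_const B) (ae_of_all _ fun y => ?_)).trans
    (by rw [integral_mul_const, hψ.integral_eq_one, one_mul])
  rw [norm_smul, Real.norm_of_nonneg (hψ.nonneg y)]
  exact mul_le_mul_of_nonneg_left (hF y) (hψ.nonneg y)

theorem abs_mean_le {N : ℕ} {t : Fin N → ℝ} {a : ℝ} (ha : 0 ≤ a) (ht : ∀ k, |t k| ≤ a) :
    |(1 / (N : ℝ)) * ∑ k, t k| ≤ a := by
  rcases N.eq_zero_or_pos with rfl | hN
  · simpa using ha
  rw [abs_mul, abs_of_pos (by positivity), one_div_mul_eq_div, div_le_iff₀ (by positivity)]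
  calc |∑ k, t k| ≤ ∑ k, |t k| := abs_sum_le_sum_abs _ _
    _ ≤ ∑ _k : Fin N, a := sum_le_sum fun k _ => ht k
    _ = a * N := by simp [mul_comm]

theorem abs_mean_sub_integral_mul_le {f ρ : α → ℝ} {a : ℝ} (hf : ∀ x, |f x| ≤ a)
    (hρ : IsProbabilityDensity ρ μ) {N : ℕ} (xs : Fin N → α) :
    |(1 / (N : ℝ)) * ∑ k, f (xs k) - ∫ x, f x * ρ x ∂μ| ≤ 2 * a := by
  have hint : |∫ x, f x * ρ x ∂μ| ≤ a := by
    simpa [mul_comm] using hρ.norm_integral_smul_le (F := f) hf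
  have ha : 0 ≤ a := (abs_nonneg _).trans hint
  calc _ ≤ |(1 / (N : ℝ)) * ∑ k, f (xs k)| + |∫ x, f x * ρ x ∂μ| := abs_sub _ _
    _ ≤ a + a := add_le_add (abs_mean_le ha fun k => hf (xs k)) hint
    _ = 2 * a := by ring

end Averages

section Convolution

variable {E : Type*} [NormedAddCommGroup E] [NormedSpace ℝ E] [FiniteDimensional ℝ E]
  [MeasurableSpace E] [BorelSpace E] {μ : Measure E}

theorem hasFDerivAt_integral_sub_mul {f ψ : E → ℝ} (hf : ContDiff ℝ 1 f)
    (hfb : BoundedIteratedFDeriv 1 f) (hψ : Integrable ψ μ) (x₀ : E) :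
    HasFDerivAt (fun x => ∫ y, f (x - y) * ψ y ∂μ) (∫ y, ψ y • fderiv ℝ f (x₀ - y) ∂μ) x₀ := by
  obtain ⟨B₀, hB₀⟩ := hfb.exists_norm_le
  obtain ⟨B₁, hB₁⟩ := hfb.exists_norm_fderiv_le le_rfl
  have hfs : ∀ x, AEStronglyMeasurable (fun y => f (x - y)) μ := fun x =>
    (hf.continuous.comp (continuous_const.sub continuous_id)).aestronglyMeasurable
  refine hasFDerivAt_integral_of_dominated_of_fderiv_le (bound := fun y => B₁ * ‖ψ y‖)
    (F' := fun x y => ψ y • fderiv ℝ f (x - y)) Filter.univ_mem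
    (Filter.Eventually.of_forall fun x => (hfs x).mul hψ.1)
    (hψ.bdd_mul (hfs x₀) (ae_of_all _ fun y => hB₀ _))
    (hψ.1.smul (((hf.continuous_fderiv one_ne_zero).comp
      (continuous_const.sub continuous_id)).aestronglyMeasurable))
    (ae_of_all _ fun y x _ => ?_) (hψ.norm.const_mul B₁) (ae_of_all _ fun y x _ => ?_)
  · rw [norm_smul, mul_comm]
    exact mul_le_mul_of_nonneg_right (hB₁ _) (norm_nonneg _)
  · simpa using ((hf.differentiable one_ne_zero (x - y)).hasFDerivAt.comp x
      ((hasFDerivAt_id x).sub_const y)).mul_const (ψ y)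

theorem norm_integral_smul_sub_le {G : Type*} [NormedAddCommGroup G] [NormedSpace ℝ G]
    [CompleteSpace G] {ψ : E → ℝ} (hψ : IsProbabilityDensity ψ μ)
    (hψm : Integrable (fun y => ‖y‖ * ψ y) μ)
    {F : E → G} {L : ℝ≥0} (hF : LipschitzWith L F) :
    ‖(∫ y, ψ y • F y ∂μ) - F 0‖ ≤ L * ∫ y, ‖y‖ * ψ y ∂μ := by
  have hbound : ∀ y, ‖ψ y • (F y - F 0)‖ ≤ L * (‖y‖ * ψ y) := fun y => by
    rw [norm_smul, Real.norm_of_nonneg (hψ.nonneg y), ← dist_eq_norm]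
    calc ψ y * dist (F y) (F 0) ≤ ψ y * (L * dist y 0) :=
          mul_le_mul_of_nonneg_left (hF.dist_le_mul y 0) (hψ.nonneg y)
      _ = L * (‖y‖ * ψ y) := by rw [dist_zero_right]; ring
  have hint : Integrable (fun y => ψ y • (F y - F 0)) μ :=
    (hψm.const_mul L).mono' (hψ.integrable.1.smul
      (hF.continuous.aestronglyMeasurable.sub aestronglyMeasurable_const)) (ae_of_all _ hbound)
  have hsplit : (∫ y, ψ y • F y ∂μ) - F 0 = ∫ y, ψ y • (F y - F 0) ∂μ := by
    simp_rw [smul_sub]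
    have hF : Integrable (fun y => ψ y • F y) μ :=
      (hint.add (hψ.integrable.smul_const (F 0))).congr (ae_of_all _ fun y => by simp [smul_sub])
    rw [integral_sub hF (hψ.integrable.smul_const _), integral_smul_const, hψ.integral_eq_one,
      one_smul]
  rw [hsplit, ← integral_const_mul]
  exact norm_integral_le_of_norm_le (hψm.const_mul L) (ae_of_all _ hbound)

variable [μ.IsAddHaarMeasure]

theorem integrable_integral_sub_mul {f ψ : E → ℝ} (hf : Integrable f μ) (hψ : Integrable ψ μ) :
    Integrable (fun x => ∫ y, f (x - y) * ψ y ∂μ) μ :=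
  (hψ.integrable_convolution (ContinuousLinearMap.mul ℝ ℝ) hf).congr
    (ae_of_all _ fun x => by simp [convolution_def, mul_comm])

theorem norm_integral_conv_mul_sub_integral_mul_le {ψ h : E → ℝ}
    (hψ : IsProbabilityDensity ψ μ) (hψm : Integrable (fun y => ‖y‖ * ψ y) μ) {M : ℝ}
    (hhb : ∀ x, ‖h x‖ ≤ M) {L : ℝ≥0} (hh : LipschitzWith L h) :
    ‖(∫ x, (∫ y, ψ (x - y) * ψ y ∂μ) * h x ∂μ) - ∫ x, ψ x * h x ∂μ‖
      ≤ L * ∫ y, ‖y‖ * ψ y ∂μ := by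
  set K : E → ℝ := fun u => ∫ t, ψ t * h (t + u) ∂μ with hK
  have hint : ∀ u, Integrable (fun t => ψ t * h (t + u)) μ := fun u =>
    hψ.integrable.mul_bdd
      (hh.continuous.comp (continuous_id.add continuous_const)).aestronglyMeasurable
      (ae_of_all _ fun t => hhb _)
  have hKlip : LipschitzWith L K := LipschitzWith.of_dist_le_mul fun u w => by
    rw [dist_eq_norm, hK, ← integral_sub (hint u) (hint w)]
    calc ‖∫ t, ψ t * h (t + u) - ψ t * h (t + w) ∂μ‖ ≤ ∫ t, L * dist u w * ψ t ∂μ := by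
          refine norm_integral_le_of_norm_le (hψ.integrable.const_mul _) (ae_of_all _ fun t => ?_)
          rw [← mul_sub, norm_mul, Real.norm_of_nonneg (hψ.nonneg t), mul_comm]
          refine mul_le_mul_of_nonneg_right ?_ (hψ.nonneg t)
          simpa [dist_eq_norm] using hh.dist_le_mul (t + u) (t + w)
      _ = L * dist u w := by rw [integral_const_mul, hψ.integral_eq_one, mul_one]
  have hprod : Integrable (Function.uncurry fun x y => ψ (x - y) * ψ y * h x) (μ.prod μ) := by
    have := (hψ.integrable.convolution_integrand (ContinuousLinearMap.mul ℝ ℝ)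
      hψ.integrable (μ := μ)).mul_bdd (hh.continuous.comp continuous_fst).aestronglyMeasurable
      (ae_of_all _ fun p => hhb p.1)
    refine this.congr (ae_of_all _ fun p => ?_)
    simp only [ContinuousLinearMap.mul_apply', Function.comp_apply, Function.uncurry]
    ring
  have hconv : ∫ x, (∫ y, ψ (x - y) * ψ y ∂μ) * h x ∂μ = ∫ u, ψ u • K u ∂μ := by
    simp_rw [← integral_mul_const]
    rw [integral_integral_swap hprod]
    refine integral_congr_ae (ae_of_all _ fun u => ?_)
    dsimp only
    rw [smul_eq_mul, hK, ← integral_const_mul,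
      ← integral_sub_right_eq_self (fun t => ψ u * (ψ t * h (t + u))) u]
    simp only [sub_add_cancel]
    congr 1 with x
    ring
  have hK0 : ∫ x, ψ x * h x ∂μ = K 0 := by simp [hK]
  rw [hconv, hK0]
  exact norm_integral_smul_sub_le hψ hψm hKlip

theorem abs_integral_mul_conv_sub_le {ψ h : E → ℝ} (hψ : IsProbabilityDensity ψ μ)
    (hψm : Integrable (fun y => ‖y‖ * ψ y) μ) {M : ℝ} (hhb : ∀ x, ‖h x‖ ≤ M) {L : ℝ≥0}
    (hh : LipschitzWith L h) :
    |∫ x, h x * ((∫ y, ψ (x - y) * ψ y ∂μ) - ψ x) ∂μ| ≤ L * ∫ y, ‖y‖ * ψ y ∂μ := by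
  have hmeas := hh.continuous.aestronglyMeasurable (μ := μ)
  have hΦ := (integrable_integral_sub_mul hψ.integrable hψ.integrable).mul_bdd hmeas
    (ae_of_all _ hhb)
  have hψh := hψ.integrable.mul_bdd hmeas (ae_of_all _ hhb)
  simp_rw [mul_sub, mul_comm (h _)]
  rw [integral_sub hΦ hψh, ← Real.norm_eq_abs]
  exact norm_integral_conv_mul_sub_integral_mul_le hψ hψm hhb hh

end Convolution

section Divergence

variable {E : Type*} [NormedAddCommGroup E] [InnerProductSpace ℝ E] [FiniteDimensional ℝ E]

def divergence (G : E → E) (x : E) : ℝ := LinearMap.trace ℝ E (fderiv ℝ G x)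

def traceCLM : (E →L[ℝ] E) →L[ℝ] ℝ :=
  LinearMap.toContinuousLinearMap ((LinearMap.trace ℝ E).comp (ContinuousLinearMap.coeLM ℝ))

theorem divergence_eq_traceCLM (G : E → E) (x : E) :
    divergence G x = traceCLM (fderiv ℝ G x) := rfl

theorem exists_norm_divergence_le {G : E → E} {C : ℝ} (hG : ∀ x, ‖fderiv ℝ G x‖ ≤ C) :
    ∃ M, ∀ x, ‖divergence G x‖ ≤ M :=
  ⟨‖traceCLM (E := E)‖ * C, fun x => by
    rw [divergence_eq_traceCLM]
    exact (ContinuousLinearMap.le_opNorm _ _).trans (by gcongr; exact hG x)⟩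

theorem LipschitzWith.exists_lipschitzWith_divergence {G : E → E} {L : ℝ≥0}
    (hG : LipschitzWith L (fderiv ℝ G)) : ∃ K, LipschitzWith K (divergence G) :=
  ⟨_, (traceCLM (E := E)).lipschitz.comp hG⟩

variable [MeasurableSpace E] [BorelSpace E] {μ : Measure E} [μ.IsAddHaarMeasure]

theorem integral_fderiv_apply_eq_neg_integral_divergence_mul {G : E → E} {χ : E → ℝ}
    (hG : Differentiable ℝ G) (hGi : Integrable G μ) {C : ℝ} (hDG : ∀ x, ‖fderiv ℝ G x‖ ≤ C)
    (hχ : Differentiable ℝ χ) (hχi : Integrable χ μ) {C₀ C₁ : ℝ} (hχ₀ : ∀ x, ‖χ x‖ ≤ C₀)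
    (hχ₁ : ∀ x, ‖fderiv ℝ χ x‖ ≤ C₁) :
    ∫ x, fderiv ℝ χ x (G x) ∂μ = -∫ x, divergence G x * χ x ∂μ := by
  let b := stdOrthonormalBasis ℝ E
  let g : _ → E → ℝ := fun i x => ⟪b i, G x⟫
  have hg : ∀ i x, HasFDerivAt (g i) ((innerSL ℝ (b i)).comp (fderiv ℝ G x)) x := fun i x =>
    (innerSL ℝ (b i)).hasFDerivAt.comp x (hG x).hasFDerivAt
  have hgb : ∀ i x, ‖fderiv ℝ (g i) x (b i)‖ ≤ C := fun i x => by
    rw [(hg i x).fderiv]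
    calc ‖((innerSL ℝ (b i)).comp (fderiv ℝ G x)) (b i)‖
        ≤ ‖(innerSL ℝ (b i)).comp (fderiv ℝ G x)‖ * ‖b i‖ := ContinuousLinearMap.le_opNorm _ _
      _ ≤ ‖innerSL ℝ (b i)‖ * ‖fderiv ℝ G x‖ * ‖b i‖ := by
          gcongr; exact ContinuousLinearMap.opNorm_comp_le _ _
      _ ≤ C := by simpa [b.norm_eq_one] using hDG x
  have hlhs : ∀ x, fderiv ℝ χ x (G x) = ∑ i, g i x * fderiv ℝ χ x (b i) := fun x => by
    conv_lhs => rw [← b.sum_repr' (G x)]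
    simp [g, map_sum, map_smul]
  have hrhs : ∀ x, divergence G x * χ x = ∑ i, fderiv ℝ (g i) x (b i) * χ x := fun x => by
    rw [divergence, LinearMap.trace_eq_sum_inner _ b, sum_mul]
    simp [(hg _ x).fderiv]
  have hgi : ∀ i, Integrable (g i) μ := fun i => (innerSL ℝ (b i)).integrable_comp hGi
  have hint₁ : ∀ i, Integrable (fun x => fderiv ℝ (g i) x (b i) * χ x) μ := fun i =>
    hχi.bdd_mul (measurable_fderiv_apply_const ℝ (g i) (b i)).aestronglyMeasurable
      (ae_of_all _ (hgb i))
  have hint₂ : ∀ i, Integrable (fun x => g i x * fderiv ℝ χ x (b i)) μ := fun i =>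
    (hgi i).mul_bdd (measurable_fderiv_apply_const ℝ χ (b i)).aestronglyMeasurable
      (ae_of_all _ fun x => (ContinuousLinearMap.le_opNorm _ _).trans (by simpa using hχ₁ x))
  have hint₃ : ∀ i, Integrable (fun x => g i x * χ x) μ := fun i =>
    (hgi i).mul_bdd hχ.continuous.aestronglyMeasurable (ae_of_all _ hχ₀)
  simp_rw [hlhs, hrhs]
  rw [integral_finsetSum _ fun i _ => hint₂ i, integral_finsetSum _ fun i _ => hint₁ i,
    ← sum_neg_distrib]
  exact sum_congr rfl fun i _ => integral_mul_fderiv_eq_neg_fderiv_mul_of_integrable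
    (hint₁ i) (hint₂ i) (hint₃ i) (fun x _ => (hg i x).differentiableAt) (fun x _ => hχ x)

theorem integral_fderiv_comp_sub_apply_eq {G : E → E} {χ : E → ℝ}
    (hG : Differentiable ℝ G) (hGi : Integrable G μ) {C : ℝ} (hDG : ∀ x, ‖fderiv ℝ G x‖ ≤ C)
    (hχ : Differentiable ℝ χ) (hχi : Integrable χ μ) {C₀ C₁ : ℝ} (hχ₀ : ∀ x, ‖χ x‖ ≤ C₀)
    (hχ₁ : ∀ x, ‖fderiv ℝ χ x‖ ≤ C₁) (a : E) :
    ∫ x, fderiv ℝ χ (x - a) (G x) ∂μ = -∫ y, divergence G (y + a) * χ y ∂μ := by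
  have hχa : Differentiable ℝ fun x => χ (x - a) := hχ.comp (differentiable_id.sub_const a)
  simp_rw [← fderiv_comp_sub (f := χ) a]
  rw [integral_fderiv_apply_eq_neg_integral_divergence_mul hG hGi hDG hχa
    (hχi.comp_sub_right a) (fun x => hχ₀ _) (fun x => by rw [fderiv_comp_sub]; exact hχ₁ _),
    ← integral_sub_right_eq_self (fun y => divergence G (y + a) * χ y) a]
  simp

end Divergence

section Remainder

variable {E : Type*} [NormedAddCommGroup E] [InnerProductSpace ℝ E] [FiniteDimensional ℝ E]

theorem inner_gradient_mean_comp_sub {χ : E → ℝ} (hχ : Differentiable ℝ χ) {N : ℕ}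
    (a : Fin N → E) (x w : E) :
    ⟪gradient (fun z => (1 / (N : ℝ)) * ∑ l, χ (z - a l)) x, w⟫
      = (1 / (N : ℝ)) * ∑ l, fderiv ℝ χ (x - a l) w := by
  have h : HasFDerivAt (fun z => (1 / (N : ℝ)) * ∑ l, χ (z - a l))
      ((1 / (N : ℝ)) • ∑ l, fderiv ℝ χ (x - a l)) x := by
    simpa using (HasFDerivAt.fun_sum (u := univ) fun l _ => (hχ (x - a l)).hasFDerivAt.comp x
      ((hasFDerivAt_id x).sub_const (a l))).const_mul (1 / (N : ℝ))
  rw [inner_gradient_left, h.fderiv]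
  simp

variable [MeasurableSpace E] [BorelSpace E] {μ : Measure E}

theorem abs_inner_gradient_integral_sub_mul_sub_le {ρ ψ : E → ℝ} (hρ : ContDiff ℝ 1 ρ)
    (hρb : BoundedIteratedFDeriv 1 ρ) {L : ℝ≥0} (hL : LipschitzWith L (fderiv ℝ ρ))
    (hψ : IsProbabilityDensity ψ μ) (hψm : Integrable (fun y => ‖y‖ * ψ y) μ) (x w : E) :
    |⟪gradient (fun z => (∫ y, ρ (z - y) * ψ y ∂μ) - ρ z) x, w⟫|
      ≤ L * (∫ y, ‖y‖ * ψ y ∂μ) * ‖w‖ := by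
  have hLx : LipschitzWith L fun y => fderiv ℝ ρ (x - y) := LipschitzWith.of_dist_le_mul
    fun y z => by simpa only [dist_sub_left] using hL.dist_le_mul (x - y) (x - z)
  rw [inner_gradient_left, ((hasFDerivAt_integral_sub_mul hρ hρb hψ.integrable x).fun_sub
    (hρ.differentiable one_ne_zero x).hasFDerivAt).fderiv, ← Real.norm_eq_abs]
  refine (ContinuousLinearMap.le_opNorm _ _).trans (mul_le_mul_of_nonneg_right ?_ (norm_nonneg _))
  simpa using norm_integral_smul_sub_le hψ hψm hLx

variable [μ.IsAddHaarMeasure]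

theorem abs_integral_mul_inner_gradient_mean_comp_sub_le {ρ χ : E → ℝ} {v : E → E}
    (hG : Differentiable ℝ fun x => ρ x • v x) (hGi : Integrable (fun x => ρ x • v x) μ)
    {C : ℝ} (hDG : ∀ x, ‖fderiv ℝ (fun x => ρ x • v x) x‖ ≤ C)
    (hχ : Differentiable ℝ χ) (hχi : Integrable χ μ) {C₀ C₁ : ℝ} (hχ₀ : ∀ x, ‖χ x‖ ≤ C₀)
    (hχ₁ : ∀ x, ‖fderiv ℝ χ x‖ ≤ C₁) {K : ℝ}
    (hK : ∀ a, |∫ y, divergence (fun x => ρ x • v x) (y + a) * χ y ∂μ| ≤ K)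
    {N : ℕ} (a : Fin N → E) :
    |∫ x, ρ x * ⟪gradient (fun z => (1 / (N : ℝ)) * ∑ l, χ (z - a l)) x, v x⟫ ∂μ| ≤ K := by
  have hgrad : ∀ x, ρ x * ⟪gradient (fun z => (1 / (N : ℝ)) * ∑ l, χ (z - a l)) x, v x⟫
      = (1 / (N : ℝ)) * ∑ l, fderiv ℝ χ (x - a l) (ρ x • v x) := fun x => by
    rw [inner_gradient_mean_comp_sub hχ, mul_left_comm, mul_sum]
    simp [map_smul]
  have hint : ∀ l, Integrable (fun x => fderiv ℝ χ (x - a l) (ρ x • v x)) μ := fun l =>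
    (hGi.norm.const_mul C₁).mono' (ContinuousLinearMap.measurable_apply₂.comp
      (((measurable_fderiv ℝ χ).comp (measurable_id.sub_const _)).prodMk
        hG.continuous.measurable)).aestronglyMeasurable (ae_of_all _ fun x =>
      (ContinuousLinearMap.le_opNorm _ _).trans (by gcongr; exact hχ₁ _))
  rw [integral_congr_ae (ae_of_all _ hgrad), integral_const_mul,
    integral_finsetSum _ fun l _ => hint l]
  refine abs_mean_le ((abs_nonneg _).trans (hK 0)) fun l => ?_
  rw [integral_fderiv_comp_sub_apply_eq hG hGi hDG hχ hχi hχ₀ hχ₁, abs_neg]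
  exact hK (a l)

theorem exists_abs_integral_mul_inner_gradient_mean_conv_sub_le {ρ : E → ℝ} {v : E → E}
    (hρ : ContDiff ℝ 2 ρ) (hρb : BoundedIteratedFDeriv 2 ρ) (hρi : Integrable ρ μ)
    (hv : ContDiff ℝ 2 v) (hvb : BoundedIteratedFDeriv 2 v) :
    ∃ L : ℝ≥0, ∀ ψ : E → ℝ, IsProbabilityDensity ψ μ → Integrable (fun y => ‖y‖ * ψ y) μ →
      ContDiff ℝ 1 ψ → BoundedIteratedFDeriv 1 ψ → ∀ (N : ℕ) (a : Fin N → E),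
      |∫ x, ρ x * ⟪gradient (fun z => (1 / (N : ℝ)) *
          ∑ l, ((∫ y, ψ (z - a l - y) * ψ y ∂μ) - ψ (z - a l))) x, v x⟫ ∂μ|
        ≤ L * ∫ y, ‖y‖ * ψ y ∂μ := by
  have hG : ContDiff ℝ 2 fun x => ρ x • v x := hρ.smul hv
  have hGb : BoundedIteratedFDeriv 2 fun x => ρ x • v x := hρb.smul hρ hv hvb
  obtain ⟨V, hV⟩ := hvb.exists_norm_le
  have hGi : Integrable (fun x => ρ x • v x) μ :=
    hρi.smul_bdd V hv.continuous.aestronglyMeasurable (ae_of_all _ hV)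
  obtain ⟨C, hC⟩ := hGb.exists_norm_fderiv_le (by norm_num)
  obtain ⟨M, hM⟩ := exists_norm_divergence_le hC
  obtain ⟨LG, hLG⟩ := hGb.exists_lipschitzWith_fderiv le_rfl hG
  obtain ⟨L, hL⟩ := hLG.exists_lipschitzWith_divergence
  refine ⟨L, fun ψ hψ hψm hψd hψb N a => ?_⟩
  obtain ⟨B₀, hB₀⟩ := hψb.exists_norm_le
  obtain ⟨B₁, hB₁⟩ := hψb.exists_norm_fderiv_le le_rfl
  have hΦ := hasFDerivAt_integral_sub_mul hψd hψb hψ.integrable (μ := μ)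
  have hψd' := hψd.differentiable one_ne_zero
  set χ : E → ℝ := fun z => (∫ y, ψ (z - y) * ψ y ∂μ) - ψ z
  have hχ : Differentiable ℝ χ := fun z => (hΦ z).differentiableAt.sub (hψd' z)
  have hχ₀ : ∀ z, ‖χ z‖ ≤ B₀ + B₀ := fun z => (norm_sub_le _ _).trans (add_le_add
    (by simpa [mul_comm] using hψ.norm_integral_smul_le fun y => hB₀ (z - y)) (hB₀ z))
  have hχ₁ : ∀ z, ‖fderiv ℝ χ z‖ ≤ B₁ + B₁ := fun z => by
    rw [fderiv_fun_sub (hΦ z).differentiableAt (hψd' z), (hΦ z).fderiv]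
    exact (norm_sub_le _ _).trans
      (add_le_add (hψ.norm_integral_smul_le fun y => hB₁ (z - y)) (hB₁ z))
  exact abs_integral_mul_inner_gradient_mean_comp_sub_le (hG.differentiable (by norm_num)) hGi hC
    hχ ((integrable_integral_sub_mul hψ.integrable hψ.integrable).sub hψ.integrable) hχ₀ hχ₁
    (fun b => abs_integral_mul_conv_sub_le hψ hψm (fun y => hM _)
      (by simpa [Function.comp_def] using hL.comp (isometry_add_right b).lipschitz)) a

end Remainder

section Scaling

variable {d : ℕ} {β : ℝ} {N : ℕ}

theorem rpow_div_natCast_pow (hd : 0 < d) (N : ℕ) : ((N : ℝ) ^ (β / d)) ^ d = (N : ℝ) ^ β := by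
  rw [← Real.rpow_natCast, ← Real.rpow_mul (Nat.cast_nonneg N), div_mul_cancel₀]
  exact_mod_cast hd.ne'

theorem integral_comp_rpow_smul (hd : 0 < d) (hN : 0 < N) (f : EuclideanSpace ℝ (Fin d) → ℝ) :
    ∫ x, f (((N : ℝ) ^ (β / d)) • x) = ((N : ℝ) ^ β)⁻¹ * ∫ x, f x := by
  rw [Measure.integral_comp_smul_of_nonneg volume f _ (hR := by positivity),
    finrank_euclideanSpace_fin, rpow_div_natCast_pow hd, smul_eq_mul]

theorem integral_scaleN (hd : 0 < d) (hN : 0 < N) (ψ : EuclideanSpace ℝ (Fin d) → ℝ) :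
    ∫ x, scaleN β N ψ x = ∫ x, ψ x := by
  have : (N : ℝ) ^ β ≠ 0 := by positivity
  simp only [scaleN]
  rw [integral_const_mul, integral_comp_rpow_smul hd hN, mul_inv_cancel_left₀ this]

theorem integrable_scaleN (hN : 0 < N) {ψ : EuclideanSpace ℝ (Fin d) → ℝ} (hψ : Integrable ψ) :
    Integrable (scaleN β N ψ) :=
  (hψ.comp_smul (by positivity : (N : ℝ) ^ (β / d) ≠ 0)).const_mul _

theorem norm_mul_scaleN (hN : 0 < N) (ψ : EuclideanSpace ℝ (Fin d) → ℝ)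
    (x : EuclideanSpace ℝ (Fin d)) :
    ‖x‖ * scaleN β N ψ x = (N : ℝ) ^ (-(β / d)) * scaleN β N (fun u => ‖u‖ * ψ u) x := by
  have hc : 0 < (N : ℝ) ^ (β / d) := by positivity
  simp only [scaleN]
  rw [norm_smul, Real.norm_of_nonneg hc.le, Real.rpow_neg (Nat.cast_nonneg N)]
  field_simp

theorem integrable_norm_mul_scaleN (hN : 0 < N) {ψ : EuclideanSpace ℝ (Fin d) → ℝ}
    (hψ : Integrable fun x => ‖x‖ * ψ x) : Integrable fun x => ‖x‖ * scaleN β N ψ x := by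
  simp_rw [norm_mul_scaleN hN]
  exact (integrable_scaleN hN hψ).const_mul _

theorem integral_norm_mul_scaleN (hd : 0 < d) (hN : 0 < N) (ψ : EuclideanSpace ℝ (Fin d) → ℝ) :
    ∫ x, ‖x‖ * scaleN β N ψ x = (N : ℝ) ^ (-(β / d)) * ∫ x, ‖x‖ * ψ x := by
  simp_rw [norm_mul_scaleN hN]
  rw [integral_const_mul, integral_scaleN hd hN]

theorem isProbabilityDensity_scaleN (hd : 0 < d) (hN : 0 < N)
    {ψ : EuclideanSpace ℝ (Fin d) → ℝ} (hψ : IsProbabilityDensity ψ volume) :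
    IsProbabilityDensity (scaleN β N ψ) volume where
  nonneg x := mul_nonneg (by positivity) (hψ.nonneg _)
  integrable := integrable_scaleN hN hψ.integrable
  integral_eq_one := by rw [integral_scaleN hd hN, hψ.integral_eq_one]

theorem scaleN_conv (hd : 0 < d) (hN : 0 < N) (f g : EuclideanSpace ℝ (Fin d) → ℝ) :
    scaleN β N (conv f g) = conv (scaleN β N f) (scaleN β N g) := by
  ext x
  have : (N : ℝ) ^ β ≠ 0 := by positivity
  simp only [scaleN, conv, smul_sub]
  simp_rw [mul_mul_mul_comm ((N : ℝ) ^ β)]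
  rw [integral_const_mul, integral_comp_rpow_smul hd hN
    (fun y => f ((N : ℝ) ^ (β / d) • x - y) * g y), mul_assoc, mul_inv_cancel_left₀ this]

theorem contDiff_scaleN {n : ℕ} {ψ : EuclideanSpace ℝ (Fin d) → ℝ} (hψ : ContDiff ℝ n ψ) :
    ContDiff ℝ n (scaleN β N ψ) :=
  contDiff_const.mul (hψ.comp (contDiff_id.const_smul _))

theorem boundedIteratedFDeriv_scaleN {n : ℕ} {ψ : EuclideanSpace ℝ (Fin d) → ℝ}
    (hψ : ContDiff ℝ n ψ) (hψb : BoundedIteratedFDeriv n ψ) :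
    BoundedIteratedFDeriv n (scaleN β N ψ) := by
  set c : EuclideanSpace ℝ (Fin d) →L[ℝ] EuclideanSpace ℝ (Fin d) :=
    (N : ℝ) ^ (β / d) • ContinuousLinearMap.id ℝ _
  have hscale : scaleN β N ψ = (N : ℝ) ^ β • (ψ ∘ c) := rfl
  intro i hi
  obtain ⟨C, hC⟩ := hψb i hi
  have hi' : (i : WithTop ℕ∞) ≤ n := by exact_mod_cast hi
  refine ⟨‖(N : ℝ) ^ β‖ * (C * ‖c‖ ^ i), fun x => ?_⟩
  rw [hscale, iteratedFDeriv_const_smul_apply ((hψ.comp c.contDiff).contDiffAt.of_le hi'),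
    norm_smul, c.iteratedFDeriv_comp_right hψ x hi']
  gcongr
  refine (ContinuousMultilinearMap.norm_compContinuousLinearMap_le _ _).trans ?_
  rw [prod_const, card_univ, Fintype.card_fin]
  gcongr
  exact hC _

end Scaling

theorem statement12_general
    (d : ℕ) (hd : 1 ≤ d) (β : ℝ)
    (φ₁r : EuclideanSpace ℝ (Fin d) → ℝ)
    (hφ_nonneg : ∀ x, 0 ≤ φ₁r x)
    (hφ_int : Integrable φ₁r)
    (hφ_one : ∫ x, φ₁r x = 1)
    (hφ_smooth : ContDiff ℝ 2 φ₁r)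
    (hφ_derivs_bdd : ∀ i : ℕ, i ≤ 2 → ∃ B, ∀ x, ‖iteratedFDeriv ℝ i φ₁r x‖ ≤ B)
    (hφ_mom : Integrable fun x : EuclideanSpace ℝ (Fin d) => ‖x‖ * φ₁r x)
    (ρ : EuclideanSpace ℝ (Fin d) → ℝ)
    (hρ_nonneg : ∀ x, 0 ≤ ρ x)
    (hρ_int : Integrable ρ)
    (hρ_one : ∫ x, ρ x = 1)
    (hρ_smooth : ContDiff ℝ 2 ρ)
    (hρ_derivs_bdd : ∀ i : ℕ, i ≤ 2 → ∃ B, ∀ x, ‖iteratedFDeriv ℝ i ρ x‖ ≤ B)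
    (v : EuclideanSpace ℝ (Fin d) → EuclideanSpace ℝ (Fin d))
    (hv_smooth : ContDiff ℝ 2 v)
    (hv_derivs_bdd : ∀ i : ℕ, i ≤ 2 → ∃ B, ∀ x, ‖iteratedFDeriv ℝ i v x‖ ≤ B) :
    ∃ C : ℝ, ∀ N : ℕ, 1 ≤ N → ∀ xs : Fin N → EuclideanSpace ℝ (Fin d),
      |2 * ((1 / (N : ℝ)) * ∑ k,
            ⟪gradient (fun z => conv ρ (scaleN β N φ₁r) z - ρ z) (xs k), v (xs k)⟫
          - ∫ x, ⟪gradient (fun z => conv ρ (scaleN β N φ₁r) z - ρ z) x, v x⟫ * ρ x)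
        + 2 * ∫ x, ρ x *
            ⟪gradient (fun z => (1 / (N : ℝ)) * ∑ l,
                (scaleN β N (conv φ₁r φ₁r) (z - xs l) - scaleN β N φ₁r (z - xs l))) x,
              v x⟫|
      ≤ C * (N : ℝ) ^ (-(β / d)) := by
  have hφ : IsProbabilityDensity φ₁r volume := ⟨hφ_nonneg, hφ_int, hφ_one⟩
  have hρ : IsProbabilityDensity ρ volume := ⟨hρ_nonneg, hρ_int, hρ_one⟩
  have hρb : BoundedIteratedFDeriv 2 ρ := hρ_derivs_bdd
  have hvb : BoundedIteratedFDeriv 2 v := hv_derivs_bdd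
  obtain ⟨Lρ, hLρ⟩ := hρb.exists_lipschitzWith_fderiv le_rfl hρ_smooth
  obtain ⟨V, hV⟩ := hvb.exists_norm_le
  obtain ⟨L, hL⟩ := exists_abs_integral_mul_inner_gradient_mean_conv_sub_le (μ := volume)
    hρ_smooth hρb hρ_int hv_smooth hvb
  set m := ∫ x, ‖x‖ * φ₁r x
  refine ⟨4 * Lρ * m * V + 2 * L * m, fun N hN xs => ?_⟩
  set ψ := scaleN β N φ₁r
  have hψ : IsProbabilityDensity ψ volume := isProbabilityDensity_scaleN hd hN hφ
  have hψm : Integrable fun x => ‖x‖ * ψ x := integrable_norm_mul_scaleN hN hφ_mom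
  have hA : ∀ x, |⟪gradient (fun z => conv ρ ψ z - ρ z) x, v x⟫|
      ≤ Lρ * (∫ y, ‖y‖ * ψ y) * V := fun x =>
    (abs_inner_gradient_integral_sub_mul_sub_le (hρ_smooth.of_le one_le_two)
      (hρb.mono one_le_two) hLρ hψ hψm x (v x)).trans
      (mul_le_mul_of_nonneg_left (hV x) (mul_nonneg Lρ.coe_nonneg hψ.integral_norm_mul_nonneg))
  have hB := hL ψ hψ hψm ((contDiff_scaleN hφ_smooth).of_le one_le_two)
    ((boundedIteratedFDeriv_scaleN hφ_smooth hφ_derivs_bdd).mono one_le_two) N xs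
  rw [scaleN_conv hd hN]
  refine (abs_add_le _ _).trans ?_
  rw [abs_mul, abs_mul, abs_two]
  refine (add_le_add
    (mul_le_mul_of_nonneg_left (abs_mean_sub_integral_mul_le hA hρ xs) two_pos.le)
    (mul_le_mul_of_nonneg_left hB two_pos.le)).trans_eq ?_
  rw [integral_norm_mul_scaleN hd hN]
  ring

/-- the remainder
`R_N = 2[(1/N) Σ_k ∇((ρ∗φ_Nʳ)-ρ)(x_k)·v(x_k) - ∫ ∇((ρ∗φ_Nʳ)-ρ)·v ρ dx]
      + 2 ∫ ρ ∇((S_N∗φ_N)-(S_N∗φ_Nʳ))·v dx`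
satisfies `|R_N| ≤ C N^(-β/d)` with `C` independent of `N` and of the points. -/
theorem statement12
    (d : ℕ) (hd : 1 ≤ d) (β : ℝ) (hβ : 0 < β)
    (φ₁r : EuclideanSpace ℝ (Fin d) → ℝ)
    (hφ_even : ∀ x, φ₁r (-x) = φ₁r x)
    (hφ_nonneg : ∀ x, 0 ≤ φ₁r x)
    (hφ_int : Integrable φ₁r)
    (hφ_one : ∫ x, φ₁r x = 1)
    (hφ_smooth : ContDiff ℝ 2 φ₁r)
    (hφ_derivs_bdd : ∀ i : ℕ, i ≤ 2 → ∃ B, ∀ x, ‖iteratedFDeriv ℝ i φ₁r x‖ ≤ B)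
    (hφ_L2 : MemLp φ₁r 2 (volume : Measure (EuclideanSpace ℝ (Fin d))))
    (hφ_mom : Integrable fun x : EuclideanSpace ℝ (Fin d) => ‖x‖ * φ₁r x)
    (ρ : EuclideanSpace ℝ (Fin d) → ℝ)
    (hρ_nonneg : ∀ x, 0 ≤ ρ x)
    (hρ_int : Integrable ρ)
    (hρ_one : ∫ x, ρ x = 1)
    (hρ_smooth : ContDiff ℝ 2 ρ)
    (hρ_derivs_bdd : ∀ i : ℕ, i ≤ 2 → ∃ B, ∀ x, ‖iteratedFDeriv ℝ i ρ x‖ ≤ B)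
    (hρ_L2 : MemLp ρ 2 (volume : Measure (EuclideanSpace ℝ (Fin d))))
    (v : EuclideanSpace ℝ (Fin d) → EuclideanSpace ℝ (Fin d))
    (hv_smooth : ContDiff ℝ 2 v)
    (hv_derivs_bdd : ∀ i : ℕ, i ≤ 2 → ∃ B, ∀ x, ‖iteratedFDeriv ℝ i v x‖ ≤ B) :
    ∃ C : ℝ, ∀ N : ℕ, 1 ≤ N → ∀ xs : Fin N → EuclideanSpace ℝ (Fin d),
      |2 * ((1 / (N : ℝ)) * ∑ k,
            ⟪gradient (fun z => conv ρ (scaleN β N φ₁r) z - ρ z) (xs k), v (xs k)⟫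
          - ∫ x, ⟪gradient (fun z => conv ρ (scaleN β N φ₁r) z - ρ z) x, v x⟫ * ρ x)
        + 2 * ∫ x, ρ x *
            ⟪gradient (fun z => (1 / (N : ℝ)) * ∑ l,
                (scaleN β N (conv φ₁r φ₁r) (z - xs l) - scaleN β N φ₁r (z - xs l))) x,
              v x⟫|
      ≤ C * (N : ℝ) ^ (-(β / d)) :=
  statement12_general d hd β φ₁r hφ_nonneg hφ_int hφ_one hφ_smooth hφ_derivs_bdd hφ_mom ρ hρ_nonneg
    hρ_int hρ_one hρ_smooth hρ_derivs_bdd v hv_smooth hv_derivs_bdd
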